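/- Let d ≥ 2 be an integer and a ∈ (0,1]. Let Γ, U be compact subsets of ℝ^d, μ_b, μ_i Borel probability measures supported on Γ and U, and F, A : ℝ^d → ℝ bounded measurable functions. Let T_b ⊆ Γ be a finite set of m_b distinct points that is an ε_b-net of Γ and T_i ⊆ U a finite set of m_i distinct points that is an ε_i-net of U. Assume: (i) there are constants K_m, K_n, K_z ≥ 0 such that |F(x) − F(x')|² ≤ K_m² ε_b^{2a} + K_n² ε_b^{2a+d−1} whenever x, x' ∈ Γ with ‖x − x'‖ ≤ ε_b, and |A(y) − A(y')|² ≤ K_z² ε_i^{2a+d} whenever y, y' ∈ U with ‖y − y'‖ ≤ ε_i; (ii) there are constants C_b, C_i > 0 with μ_b(B̄_ε(x) ∩ Γ) ≤ C_b ε^{d−1} and μ_i(B̄_ε(y) ∩ U) ≤ C_i ε^d for every ε > 0, x ∈ Γ, y ∈ U, where B̄_ε denotes the closed ball of radius ε; (iii) the Voronoi cells of T_b relative to Γ pairwise intersect in μ_b-null sets, and the Voronoi cells of T_i relative to U pairwise intersect in μ_i-null sets. Then Loss ≤ C₁ · Loss_m + 3 · max{K_m², K_n², K_z²} · (ε_b^{2a}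 + ε_b^{2a+d−1} + ε_i^{2a+d}), where C₁ = 3 C_b C_i m_b m_i ε_b^{d−1} ε_i^{d}. -/

import Mathlib

open MeasureTheory

open scoped ENNReal

/-!
Split `Γ` and `U` into the Voronoi cells `A_t`, `B_s` of the two nets. By (iii) the cells
partition `Γ` and `U` up to null sets, and by the net property each cell lies in the closed
`ε`-ball around its centre, so (ii) bounds its measure. On `A_t × B_s` condition (i) and
`(p + q + r)² ≤ 3 (p² + q² + r²)` bound the integrand by `3 (E_b + E_i) + 3 (F t - A s)²`.
Integrating cell by cell, the first term contributes `3 (E_b + E_i)` since the cell weights sum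
to one, and the second at most `3 C_b ε_b^{d-1} C_i ε_i^d ∑ (F t - A s)²`. The estimate is made
for the lower Lebesgue integral of `‖·‖ₑ`, which dominates the Bochner integral.
-/

theorem setLIntegral_le_ofReal_sum_of_subset_biUnion {α ι : Type*} [MeasurableSpace α]
    {μ : Measure α} {S : Set α} {I : Finset ι} {P : ι → Set α} {f : α → ℝ≥0∞} {c : ι → ℝ}
    (hcover : S ⊆ ⋃ i ∈ I, P i) (hP : ∀ i ∈ I, MeasurableSet (P i))
    (hPfin : ∀ i ∈ I, μ (P i) ≠ ⊤) (hc : ∀ i ∈ I, 0 ≤ c i)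
    (hf : ∀ i ∈ I, ∀ x ∈ P i, f x ≤ ENNReal.ofReal (c i)) :
    ∫⁻ x in S, f x ∂μ ≤ ENNReal.ofReal (∑ i ∈ I, c i * μ.real (P i)) := by
  calc ∫⁻ x in S, f x ∂μ ≤ ∫⁻ x in ⋃ i : I, P i, f x ∂μ :=
        lintegral_mono_set (by simpa only [Set.iUnion_subtype] using hcover)
    _ ≤ ∑' i : I, ∫⁻ x in P i, f x ∂μ := lintegral_iUnion_le _ _
    _ = ∑ i ∈ I, ∫⁻ x in P i, f x ∂μ := Finset.tsum_subtype I fun i => ∫⁻ x in P i, f x ∂μ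
    _ ≤ ∑ i ∈ I, ENNReal.ofReal (c i) * μ (P i) := by
        gcongr with i hi
        exact (setLIntegral_mono' (hP i hi) (hf i hi)).trans_eq (setLIntegral_const _ _)
    _ = ENNReal.ofReal (∑ i ∈ I, c i * μ.real (P i)) := by
        rw [ENNReal.ofReal_sum_of_nonneg fun i hi => mul_nonneg (hc i hi) measureReal_nonneg]
        refine Finset.sum_congr rfl fun i hi => ?_
        rw [ENNReal.ofReal_mul (hc i hi), measureReal_def, ENNReal.ofReal_toReal (hPfin i hi)]

section Voronoi

variable {E : Type*} [NormedAddCommGroup E] {S : Set E} {T : Finset E} {t x : E} {ε : ℝ}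

def voronoiCell (S : Set E) (T : Finset E) (t : E) : Set E :=
  {x ∈ S | ∀ t' ∈ T, ‖x - t‖ ≤ ‖x - t'‖}

theorem voronoiCell_subset : voronoiCell S T t ⊆ S := fun _ hx => hx.1

theorem norm_sub_le_of_mem_voronoiCell (hnet : ∀ x ∈ S, ∃ t ∈ T, ‖x - t‖ ≤ ε)
    (hx : x ∈ voronoiCell S T t) : ‖x - t‖ ≤ ε := by
  obtain ⟨t', ht', hxt'⟩ := hnet x hx.1
  exact (hx.2 t' ht').trans hxt'

theorem voronoiCell_subset_closedBall_inter (hnet : ∀ x ∈ S, ∃ t ∈ T, ‖x - t‖ ≤ ε) :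
    voronoiCell S T t ⊆ Metric.closedBall t ε ∩ S := fun _ hx =>
  ⟨mem_closedBall_iff_norm.2 (norm_sub_le_of_mem_voronoiCell hnet hx), hx.1⟩

theorem subset_biUnion_voronoiCell (hnet : ∀ x ∈ S, ∃ t ∈ T, ‖x - t‖ ≤ ε) :
    S ⊆ ⋃ t ∈ T, voronoiCell S T t := fun x hx => by
  obtain ⟨t₀, ht₀, -⟩ := hnet x hx
  obtain ⟨t, ht, hmin⟩ := T.exists_min_image (fun t => ‖x - t‖) ⟨t₀, ht₀⟩
  exact Set.mem_biUnion ht ⟨hx, hmin⟩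

theorem biUnion_voronoiCell (hnet : ∀ x ∈ S, ∃ t ∈ T, ‖x - t‖ ≤ ε) :
    ⋃ t ∈ T, voronoiCell S T t = S :=
  (Set.iUnion₂_subset fun _ _ => voronoiCell_subset).antisymm (subset_biUnion_voronoiCell hnet)

variable [MeasurableSpace E]

theorem measure_voronoiCell_le {μ : Measure E} {c : ℝ≥0∞}
    (hnet : ∀ x ∈ S, ∃ t ∈ T, ‖x - t‖ ≤ ε) (hball : ∀ x ∈ S, μ (Metric.closedBall x ε ∩ S) ≤ c)
    (hTS : (T : Set E) ⊆ S) (ht : t ∈ T) : μ (voronoiCell S T t) ≤ c :=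
  (measure_mono (voronoiCell_subset_closedBall_inter hnet)).trans (hball t (hTS ht))

variable [OpensMeasurableSpace E]

theorem measurableSet_voronoiCell (hS : MeasurableSet S) :
    MeasurableSet (voronoiCell S T t) := by
  have h : voronoiCell S T t = S ∩ ⋂ t' ∈ T, {x | ‖x - t‖ ≤ ‖x - t'‖} := by
    ext x; simp [voronoiCell]
  rw [h]
  exact hS.inter (.biInter T.countable_toSet fun t' _ =>
    (isClosed_le (by fun_prop) (by fun_prop)).measurableSet)

theorem sum_measureReal_voronoiCell {μ : Measure E} (hS : MeasurableSet S) (hμS : μ S ≠ ⊤)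
    (hnet : ∀ x ∈ S, ∃ t ∈ T, ‖x - t‖ ≤ ε)
    (hdisj : (T : Set E).Pairwise (Function.onFun (AEDisjoint μ) (voronoiCell S T))) :
    ∑ t ∈ T, μ.real (voronoiCell S T t) = μ.real S := by
  conv_rhs => rw [← biUnion_voronoiCell hnet]
  exact (measureReal_biUnion_finset₀ hdisj
    (fun t _ => (measurableSet_voronoiCell hS).nullMeasurableSet)
    (fun t _ => ne_top_of_le_ne_top hμS (measure_mono voronoiCell_subset))).symm

theorem setLIntegral_le_ofReal_sum_voronoiCell {μ : Measure E} {f : E → ℝ≥0∞} {c : E → ℝ}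
    (hS : MeasurableSet S) (hnet : ∀ x ∈ S, ∃ t ∈ T, ‖x - t‖ ≤ ε)
    (hfin : ∀ t ∈ T, μ (voronoiCell S T t) ≠ ⊤) (hc : ∀ t ∈ T, 0 ≤ c t)
    (hf : ∀ t ∈ T, ∀ x ∈ voronoiCell S T t, f x ≤ ENNReal.ofReal (c t)) :
    ∫⁻ x in S, f x ∂μ ≤ ENNReal.ofReal (∑ t ∈ T, c t * μ.real (voronoiCell S T t)) :=
  setLIntegral_le_ofReal_sum_of_subset_biUnion (subset_biUnion_voronoiCell hnet)
    (fun _ _ => measurableSet_voronoiCell hS) hfin hc hf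

end Voronoi

theorem integral_integral_le_of_lintegral_lintegral_enorm_le {α β : Type*} [MeasurableSpace α]
    [MeasurableSpace β] {μ : Measure α} {ν : Measure β} {f : α → β → ℝ} {R : ℝ} (hR : 0 ≤ R)
    (h : ∫⁻ x, ∫⁻ y, ‖f x y‖ₑ ∂ν ∂μ ≤ ENNReal.ofReal R) :
    ∫ x, ∫ y, f x y ∂ν ∂μ ≤ R := by
  have key : ‖∫ x, ∫ y, f x y ∂ν ∂μ‖ₑ ≤ ENNReal.ofReal R :=
    calc ‖∫ x, ∫ y, f x y ∂ν ∂μ‖ₑ ≤ ∫⁻ x, ‖∫ y, f x y ∂ν‖ₑ ∂μ := enorm_integral_le_lintegral_enorm _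
      _ ≤ ∫⁻ x, ∫⁻ y, ‖f x y‖ₑ ∂ν ∂μ := lintegral_mono fun x => enorm_integral_le_lintegral_enorm _
      _ ≤ ENNReal.ofReal R := h
  rw [← ofReal_norm, ENNReal.ofReal_le_ofReal_iff hR] at key
  exact le_of_abs_le key

theorem sum_sum_add_mul_mul_le_of_sum_eq_one {ι κ : Type*} {I : Finset ι} {J : Finset κ}
    {p : ι → ℝ} {q : κ → ℝ} {cp cq e : ℝ} {D : ι → κ → ℝ}
    (hp : ∀ i ∈ I, 0 ≤ p i) (hp_sum : ∑ i ∈ I, p i = 1) (hpc : ∀ i ∈ I, p i ≤ cp)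
    (hq_sum : ∑ j ∈ J, q j = 1) (hqc : ∀ j ∈ J, q j ≤ cq) (hcq : 0 ≤ cq)
    (hD : ∀ i ∈ I, ∀ j ∈ J, 0 ≤ D i j) :
    ∑ i ∈ I, (∑ j ∈ J, (e + D i j) * q j) * p i ≤ e + cp * cq * ∑ i ∈ I, ∑ j ∈ J, D i j := by
  have hsplit : ∀ i, ∑ j ∈ J, (e + D i j) * q j = e + ∑ j ∈ J, D i j * q j := fun i => by
    simp only [add_mul, Finset.sum_add_distrib, ← Finset.mul_sum, hq_sum, mul_one]
  simp_rw [hsplit]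
  simp only [add_mul, Finset.sum_add_distrib, ← Finset.mul_sum, hp_sum, mul_one]
  rw [Finset.mul_sum]
  refine add_le_add_right (Finset.sum_le_sum fun i hi => ?_) e
  calc (∑ j ∈ J, D i j * q j) * p i ≤ (∑ j ∈ J, D i j * cq) * cp := by
        refine mul_le_mul (Finset.sum_le_sum fun j hj => ?_) (hpc i hi) (hp i hi)
          (Finset.sum_nonneg fun j hj => mul_nonneg (hD i hi j hj) hcq)
        exact mul_le_mul_of_nonneg_left (hqc j hj) (hD i hi j hj)
    _ = cp * cq * ∑ j ∈ J, D i j := by rw [← Finset.sum_mul]; ring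

theorem sub_sq_le_of_sub_sq_le {a a' b b' e₁ e₂ : ℝ} (h₁ : (a - a') ^ 2 ≤ e₁)
    (h₂ : (b - b') ^ 2 ≤ e₂) : (a - b) ^ 2 ≤ 3 * (e₁ + e₂) + 3 * (a' - b') ^ 2 := by
  nlinarith [sq_nonneg (a - a' - (a' - b')), sq_nonneg (a' - b' - (b' - b)),
    sq_nonneg (a - a' - (b' - b))]

theorem mul_add_mul_add_mul_le_max_mul {k₁ k₂ k₃ x y z : ℝ} (hx : 0 ≤ x) (hy : 0 ≤ y)
    (hz : 0 ≤ z) : k₁ * x + k₂ * y + k₃ * z ≤ max (max k₁ k₂) k₃ * (x + y + z) := by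
  have h₁ : k₁ ≤ max (max k₁ k₂) k₃ := le_max_of_le_left (le_max_left k₁ k₂)
  have h₂ : k₂ ≤ max (max k₁ k₂) k₃ := le_max_of_le_left (le_max_right k₁ k₂)
  have h₃ : k₃ ≤ max (max k₁ k₂) k₃ := le_max_right _ _
  nlinarith [mul_le_mul_of_nonneg_right h₁ hx, mul_le_mul_of_nonneg_right h₂ hy,
    mul_le_mul_of_nonneg_right h₃ hz]

theorem stmt_1_general {d : ℕ} (a : ℝ)
    (Γ U : Set (EuclideanSpace ℝ (Fin d))) (hΓ : IsCompact Γ) (hU : IsCompact U)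
    (μb μi : Measure (EuclideanSpace ℝ (Fin d)))
    (hμbΓ : μb Γ = 1) (hμiU : μi U = 1)
    (F A : EuclideanSpace ℝ (Fin d) → ℝ)
    (Tb Ti : Finset (EuclideanSpace ℝ (Fin d))) (mb mi : ℕ)
    (hmb : Tb.card = mb) (hmi : Ti.card = mi)
    (hTbΓ : (Tb : Set (EuclideanSpace ℝ (Fin d))) ⊆ Γ)
    (hTiU : (Ti : Set (EuclideanSpace ℝ (Fin d))) ⊆ U)
    (εb εi : ℝ) (hεb : 0 < εb) (hεi : 0 < εi)
    (hnetb : ∀ x ∈ Γ, ∃ t ∈ Tb, ‖x - t‖ ≤ εb)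
    (hneti : ∀ y ∈ U, ∃ t ∈ Ti, ‖y - t‖ ≤ εi)
    (Km Kn Kz : ℝ)
    -- (i) modulus-of-continuity conditions
    (hF : ∀ x ∈ Γ, ∀ x' ∈ Γ, ‖x - x'‖ ≤ εb →
      (F x - F x') ^ 2 ≤ Km ^ 2 * εb ^ (2 * a) + Kn ^ 2 * εb ^ (2 * a + (d : ℝ) - 1))
    (hA : ∀ y ∈ U, ∀ y' ∈ U, ‖y - y'‖ ≤ εi →
      (A y - A y') ^ 2 ≤ Kz ^ 2 * εi ^ (2 * a + (d : ℝ)))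
    -- (ii) ball conditions
    (Cb Ci : ℝ) (hCb : 0 < Cb) (hCi : 0 < Ci)
    (hballb : ∀ ε > (0 : ℝ), ∀ x ∈ Γ,
      μb (Metric.closedBall x ε ∩ Γ) ≤ ENNReal.ofReal (Cb * ε ^ ((d : ℝ) - 1)))
    (hballi : ∀ ε > (0 : ℝ), ∀ y ∈ U,
      μi (Metric.closedBall y ε ∩ U) ≤ ENNReal.ofReal (Ci * ε ^ (d : ℝ)))
    -- (iii) Voronoi cells pairwise intersect in null sets
    (hvorb : ∀ t ∈ Tb, ∀ t' ∈ Tb, t ≠ t' →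
      μb ({x ∈ Γ | ∀ t'' ∈ Tb, ‖x - t‖ ≤ ‖x - t''‖} ∩
          {x ∈ Γ | ∀ t'' ∈ Tb, ‖x - t'‖ ≤ ‖x - t''‖}) = 0)
    (hvori : ∀ t ∈ Ti, ∀ t' ∈ Ti, t ≠ t' →
      μi ({y ∈ U | ∀ t'' ∈ Ti, ‖y - t‖ ≤ ‖y - t''‖} ∩
          {y ∈ U | ∀ t'' ∈ Ti, ‖y - t'‖ ≤ ‖y - t''‖}) = 0) :
    (∫ x in Γ, ∫ y in U, (F x - A y) ^ 2 ∂μi ∂μb) ≤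
      (3 * Cb * Ci * (mb : ℝ) * (mi : ℝ) * εb ^ ((d : ℝ) - 1) * εi ^ (d : ℝ)) *
        ((1 / ((mb : ℝ) * (mi : ℝ))) * ∑ t ∈ Tb, ∑ t' ∈ Ti, (F t - A t') ^ 2) +
      3 * max (max (Km ^ 2) (Kn ^ 2)) (Kz ^ 2) *
        (εb ^ (2 * a) + εb ^ (2 * a + (d : ℝ) - 1) + εi ^ (2 * a + (d : ℝ))) := by
  set Eb := Km ^ 2 * εb ^ (2 * a) + Kn ^ 2 * εb ^ (2 * a + (d : ℝ) - 1)
  set Ei := Kz ^ 2 * εi ^ (2 * a + (d : ℝ))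
  set cb := Cb * εb ^ ((d : ℝ) - 1)
  set ci := Ci * εi ^ (d : ℝ)
  have hΓm := hΓ.isClosed.measurableSet
  have hUm := hU.isClosed.measurableSet
  have hμb t (ht : t ∈ Tb) := measure_voronoiCell_le hnetb (hballb εb hεb) hTbΓ ht
  have hμi s (hs : s ∈ Ti) := measure_voronoiCell_le hneti (hballi εi hεi) hTiU hs
  have hsumb : ∑ t ∈ Tb, μb.real (voronoiCell Γ Tb t) = 1 := by
    rw [sum_measureReal_voronoiCell hΓm (by simp [hμbΓ]) hnetb hvorb, measureReal_def, hμbΓ,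
      ENNReal.toReal_one]
  have hsumi : ∑ s ∈ Ti, μi.real (voronoiCell U Ti s) = 1 := by
    rw [sum_measureReal_voronoiCell hUm (by simp [hμiU]) hneti hvori, measureReal_def, hμiU,
      ENNReal.toReal_one]
  have hloss : (∫ x in Γ, ∫ y in U, (F x - A y) ^ 2 ∂μi ∂μb) ≤
      ∑ t ∈ Tb, (∑ s ∈ Ti, (3 * (Eb + Ei) + 3 * (F t - A s) ^ 2) *
        μi.real (voronoiCell U Ti s)) * μb.real (voronoiCell Γ Tb t) := by
    refine integral_integral_le_of_lintegral_lintegral_enorm_le (by positivity) ?_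
    refine setLIntegral_le_ofReal_sum_voronoiCell hΓm hnetb
      (fun t ht => ne_top_of_le_ne_top ENNReal.ofReal_ne_top (hμb t ht))
      (fun t _ => by positivity) fun t ht x hx => ?_
    refine setLIntegral_le_ofReal_sum_voronoiCell hUm hneti
      (fun s hs => ne_top_of_le_ne_top ENNReal.ofReal_ne_top (hμi s hs))
      (fun s _ => by positivity) fun s hs y hy => ?_
    rw [Real.enorm_eq_ofReal (sq_nonneg _)]
    exact ENNReal.ofReal_le_ofReal <| sub_sq_le_of_sub_sq_le
      (hF x hx.1 t (hTbΓ ht) (norm_sub_le_of_mem_voronoiCell hnetb hx))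
      (hA y hy.1 s (hTiU hs) (norm_sub_le_of_mem_voronoiCell hneti hy))
  refine hloss.trans ((sum_sum_add_mul_mul_le_of_sum_eq_one (fun _ _ => measureReal_nonneg)
    hsumb (fun t ht => ENNReal.toReal_le_of_le_ofReal (by positivity) (hμb t ht)) hsumi
    (fun s hs => ENNReal.toReal_le_of_le_ofReal (by positivity) (hμi s hs)) (by positivity)
    (fun _ _ _ _ => by positivity)).trans ?_)
  have hTb : Tb.Nonempty := Finset.nonempty_of_sum_ne_zero (hsumb ▸ one_ne_zero)
  have hTi : Ti.Nonempty := Finset.nonempty_of_sum_ne_zero (hsumi ▸ one_ne_zero)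
  have hdiscrete : cb * ci * ∑ t ∈ Tb, ∑ s ∈ Ti, 3 * (F t - A s) ^ 2 =
      (3 * Cb * Ci * (mb : ℝ) * (mi : ℝ) * εb ^ ((d : ℝ) - 1) * εi ^ (d : ℝ)) *
        ((1 / ((mb : ℝ) * (mi : ℝ))) * ∑ t ∈ Tb, ∑ s ∈ Ti, (F t - A s) ^ 2) := by
    subst hmb hmi
    simp only [cb, ci, ← Finset.mul_sum]
    field_simp [hTb.card_ne_zero, hTi.card_ne_zero]
  have hmodulus := mul_add_mul_add_mul_le_max_mul (k₁ := Km ^ 2) (k₂ := Kn ^ 2) (k₃ := Kz ^ 2)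
    (by positivity : 0 ≤ εb ^ (2 * a)) (by positivity : 0 ≤ εb ^ (2 * a + (d : ℝ) - 1))
    (by positivity : 0 ≤ εi ^ (2 * a + (d : ℝ)))
  linarith

/-- Lemma 1 of the paper: let `Γ, U` be compact subsets of `ℝ^d` (`d ≥ 2`), `μ_b, μ_i`
Borel probability measures supported on `Γ` and `U`, `F, A` bounded measurable functions,
`T_b ⊆ Γ` an `ε_b`-net of `Γ` with `m_b` distinct points and `T_i ⊆ U` an `ε_i`-net of `U`
with `m_i` distinct points. Assume the modulus-of-continuity bounds (i), the ball
conditions (ii) with constants `C_b, C_i`, and that the Voronoi cells of `T_b` (resp.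
`T_i`) relative to `Γ` (resp. `U`) pairwise intersect in null sets (iii). Then
`Loss ≤ C₁ · Loss_m + 3 max{K_m², K_n², K_z²} (ε_b^{2a} + ε_b^{2a+d−1} + ε_i^{2a+d})`
with `C₁ = 3 C_b C_i m_b m_i ε_b^{d−1} ε_i^d`. -/
theorem stmt_1 {d : ℕ} (hd : 2 ≤ d) (a : ℝ) (ha : 0 < a) (ha1 : a ≤ 1)
    (Γ U : Set (EuclideanSpace ℝ (Fin d))) (hΓ : IsCompact Γ) (hU : IsCompact U)
    (μb μi : Measure (EuclideanSpace ℝ (Fin d)))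
    [IsProbabilityMeasure μb] [IsProbabilityMeasure μi]
    (hμbΓ : μb Γ = 1) (hμiU : μi U = 1)
    (F A : EuclideanSpace ℝ (Fin d) → ℝ) (hFmeas : Measurable F) (hAmeas : Measurable A)
    (hFbdd : ∃ M, ∀ x, |F x| ≤ M) (hAbdd : ∃ M, ∀ y, |A y| ≤ M)
    (Tb Ti : Finset (EuclideanSpace ℝ (Fin d))) (mb mi : ℕ)
    (hmb : Tb.card = mb) (hmi : Ti.card = mi)
    (hTbΓ : (Tb : Set (EuclideanSpace ℝ (Fin d))) ⊆ Γ)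
    (hTiU : (Ti : Set (EuclideanSpace ℝ (Fin d))) ⊆ U)
    (εb εi : ℝ) (hεb : 0 < εb) (hεi : 0 < εi)
    (hnetb : ∀ x ∈ Γ, ∃ t ∈ Tb, ‖x - t‖ ≤ εb)
    (hneti : ∀ y ∈ U, ∃ t ∈ Ti, ‖y - t‖ ≤ εi)
    (Km Kn Kz : ℝ) (hKm : 0 ≤ Km) (hKn : 0 ≤ Kn) (hKz : 0 ≤ Kz)
    -- (i) modulus-of-continuity conditions
    (hF : ∀ x ∈ Γ, ∀ x' ∈ Γ, ‖x - x'‖ ≤ εb →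
      (F x - F x') ^ 2 ≤ Km ^ 2 * εb ^ (2 * a) + Kn ^ 2 * εb ^ (2 * a + (d : ℝ) - 1))
    (hA : ∀ y ∈ U, ∀ y' ∈ U, ‖y - y'‖ ≤ εi →
      (A y - A y') ^ 2 ≤ Kz ^ 2 * εi ^ (2 * a + (d : ℝ)))
    -- (ii) ball conditions
    (Cb Ci : ℝ) (hCb : 0 < Cb) (hCi : 0 < Ci)
    (hballb : ∀ ε > (0 : ℝ), ∀ x ∈ Γ,
      μb (Metric.closedBall x ε ∩ Γ) ≤ ENNReal.ofReal (Cb * ε ^ ((d : ℝ) - 1)))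
    (hballi : ∀ ε > (0 : ℝ), ∀ y ∈ U,
      μi (Metric.closedBall y ε ∩ U) ≤ ENNReal.ofReal (Ci * ε ^ (d : ℝ)))
    -- (iii) Voronoi cells pairwise intersect in null sets
    (hvorb : ∀ t ∈ Tb, ∀ t' ∈ Tb, t ≠ t' →
      μb ({x ∈ Γ | ∀ t'' ∈ Tb, ‖x - t‖ ≤ ‖x - t''‖} ∩
          {x ∈ Γ | ∀ t'' ∈ Tb, ‖x - t'‖ ≤ ‖x - t''‖}) = 0)
    (hvori : ∀ t ∈ Ti, ∀ t' ∈ Ti, t ≠ t' →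
      μi ({y ∈ U | ∀ t'' ∈ Ti, ‖y - t‖ ≤ ‖y - t''‖} ∩
          {y ∈ U | ∀ t'' ∈ Ti, ‖y - t'‖ ≤ ‖y - t''‖}) = 0) :
    (∫ x in Γ, ∫ y in U, (F x - A y) ^ 2 ∂μi ∂μb) ≤
      (3 * Cb * Ci * (mb : ℝ) * (mi : ℝ) * εb ^ ((d : ℝ) - 1) * εi ^ (d : ℝ)) *
        ((1 / ((mb : ℝ) * (mi : ℝ))) * ∑ t ∈ Tb, ∑ t' ∈ Ti, (F t - A t') ^ 2) +
      3 * max (max (Km ^ 2) (Kn ^ 2)) (Kz ^ 2) *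
        (εb ^ (2 * a) + εb ^ (2 * a + (d : ℝ) - 1) + εi ^ (2 * a + (d : ℝ))) :=
  stmt_1_general a Γ U hΓ hU μb μi hμbΓ hμiU F A Tb Ti mb mi hmb hmi hTbΓ hTiU εb εi hεb hεi hnetb
    hneti Km Kn Kz hF hA Cb Ci hCb hCi hballb hballi hvorb hvori
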